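/- arXiv:2109.12944 — 3 statements merged into one kernel-verified Lean document; each statement's English description precedes it below -/
import Mathlib

section
/- Let ω be a radial weight with ω ∈ D̂ and let β > 0. Then there exists a constant C = C(ω, β) > 0 such that x^β ∫_0^1 r^x (1−r)^β ω(r) dr ≤ C ω_x for all 0 < x < ∞. -/
open MeasureTheory Set Filter
open scoped ENNReal

/-- The tail integral `ω̂(r) = ∫_r^1 ω(s) ds` of a radial weight. -/
noncomputable def wHat (ω : ℝ → ℝ) (r : ℝ) : ℝ := ∫ s in r..1, ω s

/-- The moment `ω_x = ∫_0^1 s^x ω(s) ds` of a radial weight. -/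
noncomputable def wMom (ω : ℝ → ℝ) (x : ℝ) : ℝ := ∫ s in (0:ℝ)..1, s ^ x * ω s

/-- A radial weight: nonnegative, integrable on `[0,1)`, with positive tail integrals. -/
def IsRadialWeight (ω : ℝ → ℝ) : Prop :=
  (∀ s ∈ Set.Ico (0:ℝ) 1, 0 ≤ ω s) ∧
    MeasureTheory.IntegrableOn ω (Set.Ico (0:ℝ) 1) ∧
    ∀ r ∈ Set.Ico (0:ℝ) 1, 0 < wHat ω r

/-- The class `D̂` of radial weights. -/
def Dhat (ω : ℝ → ℝ) : Prop :=
  ∃ C > (1:ℝ), ∀ r ∈ Set.Ico (0:ℝ) 1, wHat ω r ≤ C * wHat ω ((1 + r) / 2)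

/-- The class `Ď` of radial weights. -/
def Dcheck (ω : ℝ → ℝ) : Prop :=
  ∃ k > (1:ℝ), ∃ C > (1:ℝ), ∀ r ∈ Set.Ico (0:ℝ) 1,
    wHat ω r ≥ C * wHat ω (1 - (1 - r) / k)

/-- The class `D = D̂ ∩ Ď`. -/
def Dclass (ω : ℝ → ℝ) : Prop := Dhat ω ∧ Dcheck ω

/-- The class `M`: `ω_x ≥ C ω_{kx}` for all `x ≥ 1`. -/
def Mclass (ω : ℝ → ℝ) : Prop :=
  ∃ C > (1:ℝ), ∃ k > (1:ℝ), ∀ x : ℝ, 1 ≤ x → wMom ω x ≥ C * wMom ω (k * x)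

/-- The fractional derivative `D^μ f(z) = Σ (f̂(n)/μ_{2n+1}) zⁿ` induced by a radial
weight `μ`, acting on the Taylor coefficients `a` of `f`. -/
noncomputable def Dfrac (μ : ℝ → ℝ) (a : ℕ → ℂ) (z : ℂ) : ℂ :=
  ∑' n : ℕ, (a n / ((wMom μ (2 * (n : ℝ) + 1) : ℝ) : ℂ)) * z ^ n

/-- `∫_𝔻 |f(z)|^p w(|z|) dA(z)` as a Lebesgue integral (up to the normalization `1/π`). -/
noncomputable def discLInt (p : ℝ) (w : ℝ → ℝ) (f : ℂ → ℂ) : ℝ≥0∞ :=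
  ∫⁻ z in Metric.ball (0:ℂ) 1, ENNReal.ofReal (‖f z‖ ^ p * w ‖z‖)

/-!
Split `[0, 1)` at `t = 1 - 1/(2x)`. On `[t, 1]` we have `x (1 - r) ≤ 1/2`, so that part is at
most `ω̂(t)`, and `ω̂(t) ≤ 2 ω_x` because `t^x ≥ 1/2` by Bernoulli's inequality. Below `t`, cut at
the points `1 - 2ᵏ/(2x)`: on the `k`-th piece `r^x ≤ e^(-2ᵏ/2)` and `(x (1 - r))^β ≤ 2^(kβ)`,
while `k + 1` applications of the `D̂` condition bound the tail integral from the left end of the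
piece by `C^(k+1) ω̂(t)`. The doubly exponential decay of `e^(-2ᵏ/2)` beats the geometric growth
of `(2^β C)^k`, so the pieces add up to a multiple of `ω̂(t)`. For `x ≤ 1` the crude bound
`ω̂(0) ≤ C ω̂(1/2) ≤ 2C ω_x` suffices.
-/

open Real

/- A radial weight is only controlled on `[0, 1)`; its indicator there has the same tail
integrals and moments, and is a nonnegative integrable function on all of `ℝ`. -/
lemma integral_indicator_Ico_eq (F : ℝ → ℝ → ℝ) (ω : ℝ → ℝ) {a b : ℝ} (ha : 0 ≤ a)
    (hab : a ≤ b) (hb : b ≤ 1) :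
    ∫ s in a..b, F s ((Ico 0 1).indicator ω s) = ∫ s in a..b, F s (ω s) :=
  intervalIntegral.integral_congr_Ioo_of_le hab fun s hs => by
    rw [indicator_of_mem (show s ∈ Ico (0:ℝ) 1 from ⟨ha.trans hs.1.le, hs.2.trans_le hb⟩)]

lemma wHat_indicator_Ico (ω : ℝ → ℝ) {r : ℝ} (hr0 : 0 ≤ r) (hr1 : r ≤ 1) :
    wHat ((Ico 0 1).indicator ω) r = wHat ω r :=
  integral_indicator_Ico_eq (fun _ w => w) ω hr0 hr1 le_rfl

lemma wMom_indicator_Ico (ω : ℝ → ℝ) (x : ℝ) :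
    wMom ((Ico 0 1).indicator ω) x = wMom ω x :=
  integral_indicator_Ico_eq (fun s w => s ^ x * w) ω le_rfl zero_le_one le_rfl

lemma Dhat.indicator_Ico {ω : ℝ → ℝ} (h : Dhat ω) : Dhat ((Ico 0 1).indicator ω) := by
  obtain ⟨C, hC1, hC⟩ := h
  refine ⟨C, hC1, fun r hr => ?_⟩
  rw [wHat_indicator_Ico ω hr.1 hr.2.le,
    wHat_indicator_Ico ω (by linarith [hr.1]) (by linarith [hr.2])]
  exact hC r hr

lemma summable_pow_mul_exp_neg_mul_two_pow (q : ℝ) {c : ℝ} (hc : 0 < c) :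
    Summable fun k : ℕ => q ^ k * exp (-(c * 2 ^ k)) := by
  have hlim : Tendsto (fun k : ℕ => ‖q‖ * exp (-(c * 2 ^ k))) atTop (nhds 0) := by
    simpa using (tendsto_exp_atBot.comp (tendsto_neg_atTop_atBot.comp
      ((tendsto_pow_atTop_atTop_of_one_lt one_lt_two).const_mul_atTop hc))).const_mul ‖q‖
  refine summable_of_ratio_norm_eventually_le (r := 2⁻¹) (by norm_num) ?_
  filter_upwards [hlim.eventually (ge_mem_nhds (by norm_num : (0:ℝ) < 2⁻¹))] with k hk
  have hexp : exp (-(c * 2 ^ (k + 1))) = exp (-(c * 2 ^ k)) * exp (-(c * 2 ^ k)) := by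
    rw [← exp_add]; ring_nf
  rw [norm_mul, norm_mul, norm_pow, norm_pow, norm_of_nonneg (exp_pos _).le,
    norm_of_nonneg (exp_pos _).le, hexp, pow_succ]
  calc ‖q‖ ^ k * ‖q‖ * (exp (-(c * 2 ^ k)) * exp (-(c * 2 ^ k)))
      = (‖q‖ ^ k * exp (-(c * 2 ^ k))) * (‖q‖ * exp (-(c * 2 ^ k))) := by ring
    _ ≤ (‖q‖ ^ k * exp (-(c * 2 ^ k))) * 2⁻¹ := by gcongr
    _ = 2⁻¹ * (‖q‖ ^ k * exp (-(c * 2 ^ k))) := mul_comm _ _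

section Tail

variable {g : ℝ → ℝ}

lemma wHat_nonneg (hg0 : 0 ≤ g) {r : ℝ} (hr : r ≤ 1) : 0 ≤ wHat g r :=
  intervalIntegral.integral_nonneg hr fun s _ => hg0 s

lemma wMom_nonneg (hg0 : 0 ≤ g) (x : ℝ) : 0 ≤ wMom g x :=
  intervalIntegral.integral_nonneg zero_le_one fun s hs => mul_nonneg (rpow_nonneg hs.1 x) (hg0 s)

lemma wHat_antitoneOn (hg : Integrable g) (hg0 : 0 ≤ g) : AntitoneOn (wHat g) (Iic 1) :=
  fun _ _ _ hb hab =>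
    intervalIntegral.integral_mono_interval hab hb le_rfl (ae_of_all _ hg0) hg.intervalIntegrable

lemma wHat_le_pow_mul_wHat {C : ℝ} (hC0 : 0 ≤ C)
    (hC : ∀ r ∈ Ico (0:ℝ) 1, wHat g r ≤ C * wHat g ((1 + r) / 2)) :
    ∀ (n : ℕ) {r : ℝ}, r ∈ Ico (0:ℝ) 1 → wHat g r ≤ C ^ n * wHat g (1 - (1 - r) / 2 ^ n)
  | 0, r, _ => by simp
  | n + 1, r, hr => by
    have hmid : (1 + r) / 2 ∈ Ico (0:ℝ) 1 := ⟨by linarith [hr.1], by linarith [hr.2]⟩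
    calc wHat g r ≤ C * wHat g ((1 + r) / 2) := hC r hr
      _ ≤ C * (C ^ n * wHat g (1 - (1 - (1 + r) / 2) / 2 ^ n)) := by
        gcongr; exact wHat_le_pow_mul_wHat hC0 hC n hmid
      _ = C ^ (n + 1) * wHat g (1 - (1 - r) / 2 ^ (n + 1)) := by
        rw [pow_succ]; ring_nf

lemma wHat_le_pow_mul_wHat_one_sub (hg : Integrable g) (hg0 : 0 ≤ g) {C : ℝ} (hC0 : 0 ≤ C)
    (hC : ∀ r ∈ Ico (0:ℝ) 1, wHat g r ≤ C * wHat g ((1 + r) / 2)) {n : ℕ} {r δ : ℝ}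
    (hr : r ∈ Ico (0:ℝ) 1) (hrδ : 1 - r ≤ 2 ^ n * δ) :
    wHat g r ≤ C ^ n * wHat g (1 - δ) := by
  have h2n : (0:ℝ) < 2 ^ n := by positivity
  have hdiv : (1 - r) / 2 ^ n ≤ δ := by rw [div_le_iff₀ h2n]; linarith
  have hpos : 0 ≤ (1 - r) / 2 ^ n := div_nonneg (by linarith [hr.2]) h2n.le
  refine (wHat_le_pow_mul_wHat hC0 hC n hr).trans (mul_le_mul_of_nonneg_left ?_ (by positivity))
  exact wHat_antitoneOn hg hg0 (mem_Iic.mpr (by linarith)) (mem_Iic.mpr (by linarith))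
    (by linarith)

lemma rpow_mul_wHat_le_wMom (hg : Integrable g) (hg0 : 0 ≤ g) {x a : ℝ} (hx : 0 ≤ x)
    (ha0 : 0 ≤ a) (ha1 : a ≤ 1) : a ^ x * wHat g a ≤ wMom g x := by
  have hint : IntervalIntegrable (fun s => s ^ x * g s) volume 0 1 :=
    hg.intervalIntegrable.continuousOn_mul (continuous_rpow_const hx).continuousOn
  calc a ^ x * wHat g a = ∫ s in a..1, a ^ x * g s := (intervalIntegral.integral_const_mul _ _).symm
    _ ≤ ∫ s in a..1, s ^ x * g s :=
      intervalIntegral.integral_mono_on ha1 (hg.intervalIntegrable.const_mul _)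
        (hint.mono_set (by simp [uIcc_of_le, ha0, ha1, Icc_subset_Icc]))
        fun s hs => mul_le_mul_of_nonneg_right (rpow_le_rpow ha0 hs.1 hx) (hg0 s)
    _ ≤ wMom g x :=
      intervalIntegral.integral_mono_interval ha0 ha1 le_rfl
        (ae_restrict_of_forall_mem measurableSet_Ioc fun s hs =>
          mul_nonneg (rpow_nonneg hs.1.le x) (hg0 s)) hint

lemma wHat_le_two_mul_wMom (hg : Integrable g) (hg0 : 0 ≤ g) {x a : ℝ} (hx : 0 ≤ x)
    (ha0 : 0 ≤ a) (ha1 : a ≤ 1) (hax : 2⁻¹ ≤ a ^ x) : wHat g a ≤ 2 * wMom g x := by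
  have := rpow_mul_wHat_le_wMom hg hg0 hx ha0 ha1
  nlinarith [wHat_nonneg hg0 ha1]

end Tail

lemma rpow_le_exp_neg_mul {r u x : ℝ} (hr0 : 0 ≤ r) (hru : r ≤ 1 - u) (hx : 0 ≤ x) :
    r ^ x ≤ exp (-(u * x)) :=
  calc r ^ x ≤ exp (-u) ^ x := rpow_le_rpow hr0 (by linarith [add_one_le_exp (-u)]) hx
    _ = exp (-(u * x)) := by rw [← exp_mul, neg_mul]

def dyadicNode (δ : ℝ) (k : ℕ) : ℝ := max 0 (1 - 2 ^ k * δ)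

section DyadicNode

variable {δ : ℝ}

lemma dyadicNode_nonneg (k : ℕ) : 0 ≤ dyadicNode δ k := le_max_left _ _

lemma dyadicNode_lt_one (hδ : 0 < δ) (k : ℕ) : dyadicNode δ k < 1 :=
  max_lt one_pos (by have := pow_pos (two_pos : (0:ℝ) < 2) k; nlinarith)

lemma dyadicNode_zero (hδ : δ ≤ 1) : dyadicNode δ 0 = 1 - δ := by
  simp [dyadicNode, hδ]

lemma dyadicNode_succ_le (hδ : 0 ≤ δ) (k : ℕ) : dyadicNode δ (k + 1) ≤ dyadicNode δ k :=
  max_le_max le_rfl (by have := pow_pos (two_pos : (0:ℝ) < 2) k; rw [pow_succ]; nlinarith)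

lemma one_sub_dyadicNode_le (k : ℕ) : 1 - dyadicNode δ k ≤ 2 ^ k * δ := by
  linarith [show 1 - 2 ^ k * δ ≤ dyadicNode δ k from le_max_right _ _]

lemma exists_dyadicNode_eq_zero (hδ : 0 < δ) : ∃ N, dyadicNode δ N = 0 := by
  obtain ⟨N, hN⟩ := pow_unbounded_of_one_lt δ⁻¹ one_lt_two
  refine ⟨N, max_eq_left ?_⟩
  have := (inv_lt_iff_one_lt_mul₀ hδ).mp hN
  linarith [mul_comm δ (2 ^ N)]

lemma rpow_le_exp_of_le_dyadicNode {r x : ℝ} (hx : 0 < x) (hr0 : 0 ≤ r) {k : ℕ}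
    (hr : r ≤ dyadicNode δ k) : r ^ x ≤ exp (-(2 ^ k * δ * x)) := by
  rcases hr0.eq_or_lt with rfl | hr0
  · rw [zero_rpow hx.ne']; positivity
  · exact rpow_le_exp_neg_mul hr0.le ((le_max_iff.mp hr).resolve_left hr0.not_ge) hx.le

end DyadicNode

/-- The bound obtained on the `k`-th dyadic piece `[dyadicNode (2x)⁻¹ (k+1), dyadicNode (2x)⁻¹ k]`,
in units of `ω̂(1 - 1/(2x))`. -/
noncomputable def dyadicCoeff (C β : ℝ) (k : ℕ) : ℝ :=
  C ^ (k + 1) * (exp (-(2⁻¹ * 2 ^ k)) * (2 ^ β) ^ k)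

lemma summable_dyadicCoeff (C β : ℝ) : Summable (dyadicCoeff C β) :=
  ((summable_pow_mul_exp_neg_mul_two_pow (2 ^ β * C) (c := 2⁻¹) (by norm_num)).mul_left C).congr
    fun k => by rw [dyadicCoeff, mul_pow, pow_succ]; ring

section Kernel

variable {g : ℝ → ℝ} {x β : ℝ}

lemma intervalIntegrable_kernel (hg : Integrable g) (hx : 0 ≤ x) (hβ : 0 ≤ β) (a b : ℝ) :
    IntervalIntegrable (fun r => r ^ x * ((1 - r) ^ β * g r)) volume a b :=
  (hg.intervalIntegrable.continuousOn_mul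
    ((continuous_rpow_const hβ).comp (continuous_const.sub continuous_id)).continuousOn
    ).continuousOn_mul (continuous_rpow_const hx).continuousOn

lemma mul_integral_kernel_le (hg : Integrable g) (hg0 : 0 ≤ g) (hx : 0 ≤ x) (hβ : 0 ≤ β)
    {a b c : ℝ} (ha : 0 ≤ a) (hab : a ≤ b) (hb : b ≤ 1)
    (hc : ∀ r ∈ Icc a b, r ^ x * (x * (1 - r)) ^ β ≤ c) :
    x ^ β * ∫ r in a..b, r ^ x * ((1 - r) ^ β * g r) ≤ c * wHat g a := by
  have hc0 : 0 ≤ c := (mul_nonneg (rpow_nonneg ha x)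
    (rpow_nonneg (mul_nonneg hx (by linarith)) β)).trans (hc a ⟨le_rfl, hab⟩)
  calc x ^ β * ∫ r in a..b, r ^ x * ((1 - r) ^ β * g r)
      = ∫ r in a..b, r ^ x * (x * (1 - r)) ^ β * g r := by
        rw [← intervalIntegral.integral_const_mul]
        refine intervalIntegral.integral_congr fun r hr => ?_
        rw [uIcc_of_le hab] at hr
        rw [mul_rpow hx (by linarith [hr.2])]
        ring
    _ ≤ ∫ r in a..b, c * g r :=
        intervalIntegral.integral_mono_on hab
          (hg.intervalIntegrable.continuousOn_mul (by fun_prop (disch := assumption)))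
          (hg.intervalIntegrable.const_mul c)
          fun r hr => mul_le_mul_of_nonneg_right (hc r hr) (hg0 r)
    _ = c * ∫ r in a..b, g r := intervalIntegral.integral_const_mul c _
    _ ≤ c * wHat g a := mul_le_mul_of_nonneg_left
        (intervalIntegral.integral_mono_interval le_rfl hab hb (ae_of_all _ hg0)
          hg.intervalIntegrable) hc0

lemma mul_integral_kernel_dyadic_le (hg : Integrable g) (hg0 : 0 ≤ g) (hx : 0 < x) (hβ : 0 ≤ β)
    (k : ℕ) :
    x ^ β * ∫ r in dyadicNode (2 * x)⁻¹ (k + 1)..dyadicNode (2 * x)⁻¹ k,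
        r ^ x * ((1 - r) ^ β * g r)
      ≤ exp (-(2⁻¹ * 2 ^ k)) * (2 ^ β) ^ k * wHat g (dyadicNode (2 * x)⁻¹ (k + 1)) := by
  have hδ : 0 < (2 * x)⁻¹ := by positivity
  refine mul_integral_kernel_le hg hg0 hx.le hβ (dyadicNode_nonneg _)
    (dyadicNode_succ_le hδ.le k) (dyadicNode_lt_one hδ k).le fun r hr => ?_
  have hr0 : 0 ≤ r := (dyadicNode_nonneg _).trans hr.1
  have hr1 : 0 ≤ x * (1 - r) :=
    mul_nonneg hx.le (by linarith [hr.2.trans (dyadicNode_lt_one hδ k).le])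
  have hexp : r ^ x ≤ exp (-(2⁻¹ * 2 ^ k)) := by
    convert rpow_le_exp_of_le_dyadicNode hx hr0 hr.2 using 3
    field_simp
  have hscale : x * (1 - r) ≤ 2 ^ k := by
    have := one_sub_dyadicNode_le (δ := (2 * x)⁻¹) (k + 1)
    calc x * (1 - r) ≤ x * (2 ^ (k + 1) * (2 * x)⁻¹) := by gcongr; linarith [hr.1]
      _ = 2 ^ k := by field_simp; ring
  calc r ^ x * (x * (1 - r)) ^ β ≤ exp (-(2⁻¹ * 2 ^ k)) * (2 ^ k) ^ β := by
        gcongr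
    _ = exp (-(2⁻¹ * 2 ^ k)) * (2 ^ β) ^ k := by rw [rpow_pow_comm zero_le_two]

lemma mul_integral_kernel_head_le (hg : Integrable g) (hg0 : 0 ≤ g) {C : ℝ} (hC0 : 0 ≤ C)
    (hC : ∀ r ∈ Ico (0:ℝ) 1, wHat g r ≤ C * wHat g ((1 + r) / 2)) (hx : 0 < x) (hβ : 0 ≤ β)
    (N : ℕ) :
    x ^ β * ∫ r in dyadicNode (2 * x)⁻¹ N..dyadicNode (2 * x)⁻¹ 0, r ^ x * ((1 - r) ^ β * g r)
      ≤ (∑ k ∈ Finset.range N, dyadicCoeff C β k) * wHat g (1 - (2 * x)⁻¹) := by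
  set p := dyadicNode (2 * x)⁻¹
  have hδ : 0 < (2 * x)⁻¹ := by positivity
  have hsplit : ∫ r in p N..p 0, r ^ x * ((1 - r) ^ β * g r)
      = ∑ k ∈ Finset.range N, ∫ r in p (k + 1)..p k, r ^ x * ((1 - r) ^ β * g r) := by
    rw [intervalIntegral.integral_symm, ← intervalIntegral.sum_integral_adjacent_intervals
      fun k _ => intervalIntegrable_kernel hg hx.le hβ _ _, ← Finset.sum_neg_distrib]
    exact Finset.sum_congr rfl fun k _ => (intervalIntegral.integral_symm _ _).symm
  rw [hsplit, Finset.mul_sum, Finset.sum_mul]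
  refine Finset.sum_le_sum fun k _ => ?_
  have hnode : p (k + 1) ∈ Ico (0:ℝ) 1 := ⟨dyadicNode_nonneg _, dyadicNode_lt_one hδ _⟩
  calc x ^ β * ∫ r in p (k + 1)..p k, r ^ x * ((1 - r) ^ β * g r)
      ≤ exp (-(2⁻¹ * 2 ^ k)) * (2 ^ β) ^ k * wHat g (p (k + 1)) :=
        mul_integral_kernel_dyadic_le hg hg0 hx hβ k
    _ ≤ exp (-(2⁻¹ * 2 ^ k)) * (2 ^ β) ^ k * (C ^ (k + 1) * wHat g (1 - (2 * x)⁻¹)) := by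
        gcongr
        exact wHat_le_pow_mul_wHat_one_sub hg hg0 hC0 hC hnode (one_sub_dyadicNode_le _)
    _ = dyadicCoeff C β k * wHat g (1 - (2 * x)⁻¹) := by rw [dyadicCoeff]; ring

lemma mul_integral_kernel_le_wMom_of_one_le (hg : Integrable g) (hg0 : 0 ≤ g) {C : ℝ}
    (hC0 : 0 ≤ C) (hC : ∀ r ∈ Ico (0:ℝ) 1, wHat g r ≤ C * wHat g ((1 + r) / 2)) (hβ : 0 ≤ β)
    (hx : 1 ≤ x) :
    x ^ β * ∫ r in (0:ℝ)..1, r ^ x * ((1 - r) ^ β * g r)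
      ≤ 2 * (∑' k, dyadicCoeff C β k + 1) * wMom g x := by
  have hx0 : 0 < x := by linarith
  have hδ : (2 * x)⁻¹ ≤ 2⁻¹ := inv_anti₀ two_pos (by linarith)
  have hδ0 : 0 < (2 * x)⁻¹ := by positivity
  set t := 1 - (2 * x)⁻¹
  have ht0 : 0 ≤ t := by linarith
  have ht1 : t ≤ 1 := by linarith
  have hS : 0 ≤ ∑' k, dyadicCoeff C β k :=
    tsum_nonneg fun k => by rw [dyadicCoeff]; positivity
  obtain ⟨N, hN⟩ := exists_dyadicNode_eq_zero hδ0
  have head : x ^ β * ∫ r in (0:ℝ)..t, r ^ x * ((1 - r) ^ β * g r)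
      ≤ (∑' k, dyadicCoeff C β k) * wHat g t := by
    have h := mul_integral_kernel_head_le hg hg0 hC0 hC hx0 hβ N
    rw [hN, dyadicNode_zero (by linarith)] at h
    exact h.trans (mul_le_mul_of_nonneg_right
      ((summable_dyadicCoeff C β).sum_le_tsum _ fun k _ => by rw [dyadicCoeff]; positivity)
      (wHat_nonneg hg0 ht1))
  have tail : x ^ β * ∫ r in t..1, r ^ x * ((1 - r) ^ β * g r) ≤ 1 * wHat g t := by
    refine mul_integral_kernel_le hg hg0 hx0.le hβ ht0 ht1 le_rfl fun r hr => ?_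
    have hscale : x * (1 - r) ≤ 1 :=
      calc x * (1 - r) ≤ x * (2 * x)⁻¹ := by gcongr; linarith [hr.1]
        _ = 2⁻¹ := by field_simp
        _ ≤ 1 := by norm_num
    exact mul_le_one₀ (rpow_le_one (ht0.trans hr.1) hr.2 hx0.le)
      (rpow_nonneg (mul_nonneg hx0.le (by linarith [hr.2])) β)
      (rpow_le_one (mul_nonneg hx0.le (by linarith [hr.2])) hscale hβ)
  have hmom : wHat g t ≤ 2 * wMom g x := by
    have hbern : 2⁻¹ ≤ t ^ x := by
      have h := one_add_mul_self_le_rpow_one_add (s := -(2 * x)⁻¹) (by linarith) hx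
      rw [← sub_eq_add_neg] at h
      convert h using 1
      field_simp
      ring
    exact wHat_le_two_mul_wMom hg hg0 hx0.le ht0 ht1 hbern
  calc x ^ β * ∫ r in (0:ℝ)..1, r ^ x * ((1 - r) ^ β * g r)
      = (x ^ β * ∫ r in (0:ℝ)..t, r ^ x * ((1 - r) ^ β * g r))
        + x ^ β * ∫ r in t..1, r ^ x * ((1 - r) ^ β * g r) := by
        rw [← mul_add, intervalIntegral.integral_add_adjacent_intervals
          (intervalIntegrable_kernel hg hx0.le hβ _ _) (intervalIntegrable_kernel hg hx0.le hβ _ _)]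
    _ ≤ (∑' k, dyadicCoeff C β k + 1) * wHat g t := by linarith
    _ ≤ (∑' k, dyadicCoeff C β k + 1) * (2 * wMom g x) := by gcongr
    _ = 2 * (∑' k, dyadicCoeff C β k + 1) * wMom g x := by ring

lemma mul_integral_kernel_le_wMom_of_le_one (hg : Integrable g) (hg0 : 0 ≤ g) {C : ℝ}
    (hC0 : 0 ≤ C) (hC : ∀ r ∈ Ico (0:ℝ) 1, wHat g r ≤ C * wHat g ((1 + r) / 2)) (hβ : 0 ≤ β)
    (hx0 : 0 < x) (hx1 : x ≤ 1) :
    x ^ β * ∫ r in (0:ℝ)..1, r ^ x * ((1 - r) ^ β * g r) ≤ 2 * C * wMom g x := by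
  have hall : x ^ β * ∫ r in (0:ℝ)..1, r ^ x * ((1 - r) ^ β * g r) ≤ 1 * wHat g 0 := by
    refine mul_integral_kernel_le hg hg0 hx0.le hβ le_rfl zero_le_one le_rfl fun r hr => ?_
    have h1r : 0 ≤ 1 - r := by linarith [hr.2]
    exact mul_le_one₀ (rpow_le_one hr.1 hr.2 hx0.le) (rpow_nonneg (mul_nonneg hx0.le h1r) β)
      (rpow_le_one (mul_nonneg hx0.le h1r) (by nlinarith [hr.1]) hβ)
  have hhalf : 2⁻¹ ≤ (2⁻¹ : ℝ) ^ x := by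
    simpa using rpow_le_rpow_of_exponent_ge (by norm_num : (0:ℝ) < 2⁻¹) (by norm_num) hx1
  have hD : wHat g 0 ≤ C * wHat g 2⁻¹ := by simpa using hC 0 ⟨le_rfl, one_pos⟩
  calc x ^ β * ∫ r in (0:ℝ)..1, r ^ x * ((1 - r) ^ β * g r) ≤ 1 * wHat g 0 := hall
    _ ≤ C * wHat g 2⁻¹ := by linarith
    _ ≤ C * (2 * wMom g x) := by
        gcongr; exact wHat_le_two_mul_wMom hg hg0 hx0.le (by norm_num) (by norm_num) hhalf
    _ = 2 * C * wMom g x := by ring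

theorem exists_mul_integral_kernel_le_wMom (hg : Integrable g) (hg0 : 0 ≤ g) (hD : Dhat g)
    (hβ : 0 ≤ β) :
    ∃ K > 0, ∀ x : ℝ, 0 < x →
      x ^ β * ∫ r in (0:ℝ)..1, r ^ x * ((1 - r) ^ β * g r) ≤ K * wMom g x := by
  obtain ⟨C, hC1, hC⟩ := hD
  have hC0 : 0 ≤ C := by linarith
  refine ⟨max (2 * (∑' k, dyadicCoeff C β k + 1)) (2 * C), by positivity, fun x hx => ?_⟩
  rcases le_total x 1 with hx1 | hx1
  · exact (mul_integral_kernel_le_wMom_of_le_one hg hg0 hC0 hC hβ hx hx1).trans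
      (mul_le_mul_of_nonneg_right (le_max_right _ _) (wMom_nonneg hg0 x))
  · exact (mul_integral_kernel_le_wMom_of_one_le hg hg0 hC0 hC hβ hx1).trans
      (mul_le_mul_of_nonneg_right (le_max_left _ _) (wMom_nonneg hg0 x))

end Kernel

/-- **Lemma A(vi).** If `ω ∈ D̂` and `β > 0`, then there is `C = C(ω,β) > 0` with
`x^β ∫_0^1 r^x (1-r)^β ω(r) dr ≤ C ω_x` for all `0 < x < ∞`. -/
theorem moment_weighted_estimate_of_Dhat (ω : ℝ → ℝ) (hω : IsRadialWeight ω)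
    (hωD : Dhat ω) (β : ℝ) (hβ : 0 < β) :
    ∃ C > (0:ℝ), ∀ x : ℝ, 0 < x →
      x ^ β * ∫ r in (0:ℝ)..1, r ^ x * ((1 - r) ^ β * ω r) ≤ C * wMom ω x := by
  obtain ⟨hω0, hωint, -⟩ := hω
  obtain ⟨K, hK, hKg⟩ := exists_mul_integral_kernel_le_wMom
    (hωint.integrable_indicator measurableSet_Ico) (indicator_nonneg hω0) hωD.indicator_Ico hβ.le
  refine ⟨K, hK, fun x hx => ?_⟩
  rw [← wMom_indicator_Ico, ← integral_indicator_Ico_eq (fun r w => r ^ x * ((1 - r) ^ β * w)) ω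
    le_rfl zero_le_one le_rfl]
  exact hKg x hx
end

section
/- Let ω be a radial weight. The following statements are equivalent: (i) ω ∈ Ď; (ii) there exist constants C = C(ω) > 0 and β = β(ω) > 0 such that ω̂(s) ≤ C ((1−s)/(1−t))^β ω̂(t) for all 0 ≤ t ≤ s < 1; (iii) there exist k = k(ω) > 1 and C = C(ω) > 0 such that ∫_r^{1−(1−r)/k} ω(s) ds ≥ C ω̂(r) for all 0 ≤ r < 1. -/
open MeasureTheory Set Filter
open scoped ENNReal

/-!
Since `∫_r^ρ ω = ω̂(r) - ω̂(ρ)`, conditions (i) and (iii) both say that, for some `k > 1` and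
`c < 1`, the map `r ↦ 1 - (1 - r)/k` contracts the tail integral: `ω̂(1 - (1 - r)/k) ≤ c ω̂(r)`.
Iterating the contraction gives `ω̂(1 - (1 - t)/kⁿ) ≤ cⁿ ω̂(t)`, and choosing `n` with
`kⁿ ≤ (1 - t)/(1 - s) < kⁿ⁺¹` turns this into (ii) with `β = log_k (1/c)`. Conversely, (ii) at
`s = 1 - (1 - t)/k` gives the contraction with `c = C k^(-β)`, which is `< 1` once `k` is large.
-/

lemma one_sub_div_mem_Ico {r k : ℝ} (hr : r ∈ Ico (0:ℝ) 1) (hk : 1 ≤ k) :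
    1 - (1 - r) / k ∈ Ico r 1 := by
  have hr1 : 0 < 1 - r := by linarith [hr.2]
  constructor
  · linarith [div_le_self hr1.le hk]
  · linarith [div_pos hr1 (by linarith : (0:ℝ) < k)]

lemma pow_le_inv_mul_rpow_logb {k c y : ℝ} {n : ℕ} (hk : 1 < k) (hc0 : 0 < c) (hc1 : c ≤ 1)
    (hy : 0 < y) (h : 1 ≤ k ^ (n + 1) * y) : c ^ n ≤ c⁻¹ * y ^ Real.logb k c⁻¹ := by
  set β := Real.logb k c⁻¹
  have hk0 : 0 < k := by linarith
  have hβ : 0 ≤ β := Real.logb_nonneg hk (one_le_inv₀ hc0 |>.2 hc1)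
  have hkβ : k ^ β = c⁻¹ := Real.rpow_logb hk0 hk.ne' (inv_pos.2 hc0)
  have hcn : c ^ n = ((k ^ n : ℝ) ^ β)⁻¹ := by
    rw [← Real.rpow_natCast k n, ← Real.rpow_mul hk0.le, mul_comm, Real.rpow_mul hk0.le, hkβ,
      Real.rpow_natCast, inv_pow, inv_inv]
  have hrhs : c⁻¹ * y ^ β = (k * y) ^ β := by rw [Real.mul_rpow hk0.le hy.le, hkβ]
  rw [hcn, hrhs, inv_le_iff_one_le_mul₀ (by positivity),
    ← Real.mul_rpow (by positivity) (by positivity),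
    show k * y * k ^ n = k ^ (n + 1) * y by ring]
  exact Real.one_le_rpow h hβ

def TailContracts (ω : ℝ → ℝ) (k c : ℝ) : Prop :=
  ∀ r ∈ Ico (0:ℝ) 1, wHat ω (1 - (1 - r) / k) ≤ c * wHat ω r

section RadialWeight

variable {ω : ℝ → ℝ}

lemma IsRadialWeight.intervalIntegrable (hω : IsRadialWeight ω) {a b : ℝ}
    (ha : 0 ≤ a) (hab : a ≤ b) (hb : b ≤ 1) : IntervalIntegrable ω volume a b := by
  rw [intervalIntegrable_iff_integrableOn_Ioo_of_le hab]
  exact hω.2.1.mono_set fun x hx => ⟨ha.trans hx.1.le, hx.2.trans_le hb⟩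

lemma wHat_sub_wHat (hω : IsRadialWeight ω) {a b : ℝ} (ha : 0 ≤ a) (hab : a ≤ b) (hb : b ≤ 1) :
    wHat ω a - wHat ω b = ∫ s in a..b, ω s := by
  rw [wHat, wHat, ← intervalIntegral.integral_add_adjacent_intervals
    (hω.intervalIntegrable ha hab hb) (hω.intervalIntegrable (ha.trans hab) hb le_rfl)]
  ring

lemma wHat_antitoneOn_s4 (hω : IsRadialWeight ω) : AntitoneOn (wHat ω) (Ico 0 1) := by
  intro a ha b hb hab
  rw [← sub_nonneg, wHat_sub_wHat hω ha.1 hab hb.2.le]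
  exact intervalIntegral.integral_nonneg hab fun u hu => hω.1 u ⟨ha.1.trans hu.1, hu.2.trans_lt hb.2⟩

lemma TailContracts.pos (hω : IsRadialWeight ω) {k c : ℝ} (hk : 1 ≤ k)
    (h : TailContracts ω k c) : 0 < c := by
  have h0 : (0:ℝ) ∈ Ico (0:ℝ) 1 := ⟨le_rfl, one_pos⟩
  have hρ := one_sub_div_mem_Ico h0 hk
  have hpos : 0 < c * wHat ω 0 := (hω.2.2 _ ⟨hρ.1, hρ.2⟩).trans_le (h 0 h0)
  exact pos_of_mul_pos_left hpos (hω.2.2 0 h0).le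

lemma TailContracts.pow {k c : ℝ} (hk : 1 ≤ k) (hc : 0 ≤ c) (h : TailContracts ω k c) :
    ∀ n : ℕ, TailContracts ω (k ^ n) (c ^ n)
  | 0 => fun r _ => by simp
  | n + 1 => fun r hr => by
    have hρ := one_sub_div_mem_Ico hr (one_le_pow₀ hk : 1 ≤ k ^ n)
    have hstep : 1 - (1 - (1 - (1 - r) / k ^ n)) / k = 1 - (1 - r) / k ^ (n + 1) := by
      rw [pow_succ]; field_simp; ring
    calc wHat ω (1 - (1 - r) / k ^ (n + 1))
        = wHat ω (1 - (1 - (1 - (1 - r) / k ^ n)) / k) := by rw [hstep]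
      _ ≤ c * wHat ω (1 - (1 - r) / k ^ n) := h _ ⟨hr.1.trans hρ.1, hρ.2⟩
      _ ≤ c * (c ^ n * wHat ω r) :=
        mul_le_mul_of_nonneg_left (TailContracts.pow hk hc h n r hr) hc
      _ = c ^ (n + 1) * wHat ω r := by ring

lemma TailContracts.wHat_le_mul_rpow (hω : IsRadialWeight ω) {k c : ℝ} (hk : 1 < k)
    (hc : c < 1) (h : TailContracts ω k c) {t s : ℝ} (ht : 0 ≤ t) (hts : t ≤ s) (hs : s < 1) :
    wHat ω s ≤ c⁻¹ * ((1 - s) / (1 - t)) ^ Real.logb k c⁻¹ * wHat ω t := by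
  have hc0 := h.pos hω hk.le
  have hs1 : 0 < 1 - s := by linarith
  have ht1 : 0 < 1 - t := by linarith
  obtain ⟨n, hn, hn1⟩ := exists_nat_pow_near (x := (1 - t) / (1 - s))
    ((one_le_div hs1).2 (by linarith)) hk
  have hkn : 0 < k ^ n := by positivity
  have hρs : 1 - (1 - t) / k ^ n ≤ s := by
    have hkn_le : k ^ n * (1 - s) ≤ 1 - t := (le_div_iff₀ hs1).1 hn
    have : 1 - s ≤ (1 - t) / k ^ n := (le_div_iff₀ hkn).2 (by linarith)
    linarith
  have hρ := one_sub_div_mem_Ico ⟨ht, hts.trans_lt hs⟩ (one_le_pow₀ hk.le : 1 ≤ k ^ n)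
  have hy : 1 ≤ k ^ (n + 1) * ((1 - s) / (1 - t)) := by
    rw [mul_div_assoc', le_div_iff₀ ht1, one_mul]
    exact ((div_lt_iff₀ hs1).1 hn1).le
  calc wHat ω s ≤ wHat ω (1 - (1 - t) / k ^ n) :=
        wHat_antitoneOn_s4 hω ⟨ht.trans hρ.1, hρ.2⟩ ⟨ht.trans hts, hs⟩ hρs
    _ ≤ c ^ n * wHat ω t := h.pow hk.le hc0.le n t ⟨ht, hts.trans_lt hs⟩
    _ ≤ c⁻¹ * ((1 - s) / (1 - t)) ^ Real.logb k c⁻¹ * wHat ω t :=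
        mul_le_mul_of_nonneg_right (pow_le_inv_mul_rpow_logb hk hc0 hc.le (by positivity) hy)
          (hω.2.2 t ⟨ht, hts.trans_lt hs⟩).le

lemma exists_tailContracts_of_wHat_le_mul_rpow {C β : ℝ} (hβ : 0 < β)
    (h : ∀ t s : ℝ, 0 ≤ t → t ≤ s → s < 1 → wHat ω s ≤ C * ((1 - s) / (1 - t)) ^ β * wHat ω t) :
    ∃ k > 1, ∃ c < 1, TailContracts ω k c := by
  have hsmall : ∀ᶠ k in atTop, 1 < k ∧ C * k ^ (-β) < 1 :=
    (eventually_gt_atTop 1).and <| by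
      have hlim := (tendsto_rpow_neg_atTop hβ).const_mul C
      rw [mul_zero] at hlim
      exact hlim.eventually (gt_mem_nhds one_pos)
  obtain ⟨k, hk, hkc⟩ := hsmall.exists
  refine ⟨k, hk, C * k ^ (-β), hkc, fun r hr => ?_⟩
  have hρ := one_sub_div_mem_Ico hr hk.le
  have hr1 : 0 < 1 - r := by linarith [hr.2]
  have hratio : (1 - (1 - (1 - r) / k)) / (1 - r) = k⁻¹ := by field_simp; ring
  have hk0 : (0:ℝ) ≤ k := by linarith
  have := h r _ hr.1 hρ.1 hρ.2
  rwa [hratio, Real.inv_rpow hk0, ← Real.rpow_neg hk0] at this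

lemma dcheck_iff_exists_tailContracts (hω : IsRadialWeight ω) :
    Dcheck ω ↔ ∃ k > 1, ∃ c < 1, TailContracts ω k c := by
  constructor
  · rintro ⟨k, hk, C, hC, h⟩
    exact ⟨k, hk, C⁻¹, inv_lt_one_of_one_lt₀ hC, fun r hr =>
      (le_inv_mul_iff₀ (by linarith)).2 (h r hr)⟩
  · rintro ⟨k, hk, c, hc, h⟩
    have hc0 := h.pos hω hk.le
    exact ⟨k, hk, c⁻¹, (one_lt_inv₀ hc0).2 hc, fun r hr => (inv_mul_le_iff₀ hc0).2 (h r hr)⟩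

lemma tailContracts_one_sub_iff (hω : IsRadialWeight ω) {k C : ℝ} (hk : 1 ≤ k) :
    TailContracts ω k (1 - C) ↔
      ∀ r ∈ Ico (0:ℝ) 1, (∫ s in r..(1 - (1 - r) / k), ω s) ≥ C * wHat ω r := by
  refine forall₂_congr fun r hr => ?_
  have hρ := one_sub_div_mem_Ico hr hk
  rw [← wHat_sub_wHat hω hr.1 hρ.1 hρ.2.le]
  constructor <;> intro h <;> linarith

end RadialWeight

/-- **Lemma B (characterizations of the class `Ď`).** For a radial weight `ω`, the
following are equivalent: (i) `ω ∈ Ď`; (ii) there are `C > 0` and `β > 0` with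
`ω̂(s) ≤ C ((1-s)/(1-t))^β ω̂(t)` whenever `0 ≤ t ≤ s < 1`; (iii) there are `k > 1`
and `C > 0` with `∫_r^{1-(1-r)/k} ω(s) ds ≥ C ω̂(r)` for all `0 ≤ r < 1`. -/
theorem Dcheck_characterizations (ω : ℝ → ℝ) (hω : IsRadialWeight ω) :
    List.TFAE
      [Dcheck ω,
        ∃ C > (0:ℝ), ∃ β > (0:ℝ), ∀ t s : ℝ, 0 ≤ t → t ≤ s → s < 1 →
          wHat ω s ≤ C * ((1 - s) / (1 - t)) ^ β * wHat ω t,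
        ∃ k > (1:ℝ), ∃ C > (0:ℝ), ∀ r ∈ Set.Ico (0:ℝ) 1,
          (∫ s in r..(1 - (1 - r) / k), ω s) ≥ C * wHat ω r] := by
  tfae_have 1 → 2 := by
    intro hD
    obtain ⟨k, hk, c, hc, h⟩ := (dcheck_iff_exists_tailContracts hω).1 hD
    have hc0 := h.pos hω hk.le
    exact ⟨c⁻¹, inv_pos.2 hc0, Real.logb k c⁻¹, Real.logb_pos hk ((one_lt_inv₀ hc0).2 hc),
      fun t s ht hts hs => h.wHat_le_mul_rpow hω hk hc ht hts hs⟩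
  tfae_have 2 → 1 := by
    rintro ⟨C, -, β, hβ, h⟩
    exact (dcheck_iff_exists_tailContracts hω).2 (exists_tailContracts_of_wHat_le_mul_rpow hβ h)
  tfae_have 1 → 3 := by
    intro hD
    obtain ⟨k, hk, c, hc, h⟩ := (dcheck_iff_exists_tailContracts hω).1 hD
    refine ⟨k, hk, 1 - c, by linarith, (tailContracts_one_sub_iff hω hk.le).1 ?_⟩
    rwa [sub_sub_cancel]
  tfae_have 3 → 1 := by
    rintro ⟨k, hk, C, hC, h⟩
    exact (dcheck_iff_exists_tailContracts hω).2
      ⟨k, hk, 1 - C, by linarith, (tailContracts_one_sub_iff hω hk.le).2 h⟩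
  tfae_finish
end

section
/- Let ω be a radial weight, 0 < p < ∞ and μ ∈ D. If there exists a constant C > 0 such that ∫_𝔻 |z|^{np} μ̂(z)^p ω(z) dA(z) ≤ C μ_{2n+1}^p ∫_𝔻 |z|^{np} ω(z) dA(z) for all n ∈ ℕ ∪ {0} (i.e., the Littlewood–Paley inequality for D^μ holds for all monomials f(z) = z^n), then ω ∈ D̂. -/
open MeasureTheory Set Filter
open scoped ENNReal

/-!
For `μ ∈ D̂` the moment `μ_x` is controlled by `μ̂(1 - 1/x)`, and `μ ∈ Ď` upgrades this to
`A μ_x ≤ μ̂(1 - K/x)` for every `A`, with `K` depending on `A`. Taking `A = (2C)^{1/p}` and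
`T = K/(2n+1)`, the factor `μ̂(|z|)^p` exceeds `2 C μ_{2n+1}^p` on `|z| ≤ 1 - T`, so the
inequality for `zⁿ` forces at least half of the mass of `|z|^{np} ω` to lie in `1 - T < |z| < 1`.
On `1 - 4T < |z| < 1` the factor `|z|^{np}` is at least of order `e^{-4pK}`, which gives
`ω̂(1 - 4T) ≲ ω̂(1 - T)`; these scales are dense enough near `0` to conclude `ω ∈ D̂`.
-/

open Real intervalIntegral
open scoped Topology

lemma integral_nonneg_of_forall_mem_Ioo {f : ℝ → ℝ} {a b : ℝ} (hab : a ≤ b)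
    (hf : ∀ s ∈ Ioo a b, 0 ≤ f s) : 0 ≤ ∫ s in a..b, f s := by
  rw [integral_of_le hab, integral_Ioc_eq_integral_Ioo]
  exact setIntegral_nonneg measurableSet_Ioo hf

lemma one_sub_div_mem_Icc {a x : ℝ} (ha : 0 ≤ a) (hax : a ≤ x) : 1 - a / x ∈ Icc (0:ℝ) 1 :=
  ⟨sub_nonneg.mpr (div_le_one_of_le₀ hax (ha.trans hax)),
    sub_le_self _ (div_nonneg ha (ha.trans hax))⟩

section Weight

variable {ν : ℝ → ℝ}

lemma intervalIntegrable_of_integrableOn_Ico {f : ℝ → ℝ} (hf : IntegrableOn f (Ico 0 1))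
    {a b : ℝ} (ha : a ∈ Icc (0:ℝ) 1) (hb : b ∈ Icc (0:ℝ) 1) : IntervalIntegrable f volume a b :=
  (((integrableOn_Icc_iff_integrableOn_Ico).mpr hf).mono_set
    (uIcc_subset_Icc ha hb)).intervalIntegrable

lemma intervalIntegrable_rpow_mul (hν : IntegrableOn ν (Ico 0 1)) {x : ℝ} (hx : 0 ≤ x)
    {a b : ℝ} (ha : a ∈ Icc (0:ℝ) 1) (hb : b ∈ Icc (0:ℝ) 1) :
    IntervalIntegrable (fun s => s ^ x * ν s) volume a b := by
  refine intervalIntegrable_of_integrableOn_Ico ?_ ha hb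
  exact (((integrableOn_Icc_iff_integrableOn_Ico).mpr hν).continuousOn_mul
    (continuousOn_id.rpow_const fun _ _ => Or.inr hx) isCompact_Icc).mono_set Ico_subset_Icc_self

lemma wHat_nonneg_s16 (hν₀ : ∀ s ∈ Ico (0:ℝ) 1, 0 ≤ ν s) {a : ℝ} (ha : a ∈ Icc (0:ℝ) 1) :
    0 ≤ wHat ν a :=
  integral_nonneg_of_forall_mem_Ioo ha.2 fun s hs => hν₀ s ⟨ha.1.trans hs.1.le, hs.2⟩

variable (hν : IntegrableOn ν (Ico 0 1)) (hν₀ : ∀ s ∈ Ico (0:ℝ) 1, 0 ≤ ν s)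
include hν hν₀

lemma wHat_anti {a b : ℝ} (ha : 0 ≤ a) (hab : a ≤ b) (hb : b ≤ 1) : wHat ν b ≤ wHat ν a := by
  have hb' : b ∈ Icc (0:ℝ) 1 := ⟨ha.trans hab, hb⟩
  rw [wHat, wHat, ← integral_add_adjacent_intervals
    (intervalIntegrable_of_integrableOn_Ico hν ⟨ha, hab.trans hb⟩ hb')
    (intervalIntegrable_of_integrableOn_Ico hν hb' ⟨zero_le_one, le_rfl⟩)]
  have : 0 ≤ ∫ s in a..b, ν s :=
    integral_nonneg_of_forall_mem_Ioo hab fun s hs => hν₀ s ⟨ha.trans hs.1.le, hs.2.trans_le hb⟩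
  linarith

lemma ofReal_wHat {a : ℝ} (ha : a ∈ Icc (0:ℝ) 1) :
    ENNReal.ofReal (wHat ν a) = ∫⁻ s in Ioo a 1, ENNReal.ofReal (ν s) := by
  rw [wHat, integral_of_le ha.2, integral_Ioc_eq_integral_Ioo,
    ofReal_integral_eq_lintegral_ofReal (hν.mono_set fun s hs => ⟨ha.1.trans hs.1.le, hs.2⟩)]
  exact (ae_restrict_iff' measurableSet_Ioo).mpr
    (Eventually.of_forall fun s hs => hν₀ s ⟨ha.1.trans hs.1.le, hs.2⟩)

end Weight

section Moments

variable {ν : ℝ → ℝ}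

lemma wMom_nonneg_s16 (hν₀ : ∀ s ∈ Ico (0:ℝ) 1, 0 ≤ ν s) (x : ℝ) : 0 ≤ wMom ν x :=
  integral_nonneg_of_forall_mem_Ioo zero_le_one fun s hs =>
    mul_nonneg (rpow_nonneg hs.1.le x) (hν₀ s ⟨hs.1.le, hs.2⟩)

variable (hν : IntegrableOn ν (Ico 0 1)) (hν₀ : ∀ s ∈ Ico (0:ℝ) 1, 0 ≤ ν s)
include hν hν₀

lemma wMom_le_wHat_zero {x : ℝ} (hx : 0 ≤ x) : wMom ν x ≤ wHat ν 0 :=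
  integral_mono_on_of_le_Ioo zero_le_one
    (intervalIntegrable_rpow_mul hν hx ⟨le_rfl, zero_le_one⟩ ⟨zero_le_one, le_rfl⟩)
    (intervalIntegrable_of_integrableOn_Ico hν ⟨le_rfl, zero_le_one⟩ ⟨zero_le_one, le_rfl⟩)
    fun s hs => mul_le_of_le_one_left (hν₀ s ⟨hs.1.le, hs.2⟩) (rpow_le_one hs.1.le hs.2.le hx)

omit hν₀ in
lemma wMom_eq_add {x c : ℝ} (hx : 0 ≤ x) (hc : c ∈ Icc (0:ℝ) 1) :
    wMom ν x = (∫ s in (0:ℝ)..c, s ^ x * ν s) + ∫ s in c..1, s ^ x * ν s :=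
  (integral_add_adjacent_intervals
    (intervalIntegrable_rpow_mul hν hx ⟨le_rfl, zero_le_one⟩ hc)
    (intervalIntegrable_rpow_mul hν hx hc ⟨zero_le_one, le_rfl⟩)).symm

lemma rpow_mul_wHat_le_wMom_s16 {x c : ℝ} (hx : 0 ≤ x) (hc : c ∈ Icc (0:ℝ) 1) :
    c ^ x * wHat ν c ≤ wMom ν x := by
  have hhead : 0 ≤ ∫ s in (0:ℝ)..c, s ^ x * ν s :=
    integral_nonneg_of_forall_mem_Ioo hc.1 fun s hs =>
      mul_nonneg (rpow_nonneg hs.1.le x) (hν₀ s ⟨hs.1.le, hs.2.trans_le hc.2⟩)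
  have htail : c ^ x * wHat ν c ≤ ∫ s in c..1, s ^ x * ν s := by
    rw [wHat, ← intervalIntegral.integral_const_mul]
    refine integral_mono_on_of_le_Ioo hc.2
      ((intervalIntegrable_of_integrableOn_Ico hν hc ⟨zero_le_one, le_rfl⟩).const_mul _)
      (intervalIntegrable_rpow_mul hν hx hc ⟨zero_le_one, le_rfl⟩) fun s hs => ?_
    exact mul_le_mul_of_nonneg_right (rpow_le_rpow hc.1 hs.1.le hx)
      (hν₀ s ⟨hc.1.trans hs.1.le, hs.2⟩)
  rw [wMom_eq_add hν hx hc]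
  linarith

lemma wMom_two_mul_le {y c : ℝ} (hy : 0 ≤ y) (hc : c ∈ Icc (0:ℝ) 1) :
    wMom ν (2 * y) ≤ c ^ y * wMom ν y + wHat ν c := by
  have h0c := intervalIntegrable_rpow_mul hν hy ⟨le_rfl, zero_le_one⟩ hc
  have hhead : (∫ s in (0:ℝ)..c, s ^ (2 * y) * ν s) ≤ c ^ y * ∫ s in (0:ℝ)..c, s ^ y * ν s := by
    rw [← intervalIntegral.integral_const_mul]
    refine integral_mono_on_of_le_Ioo hc.1
      (intervalIntegrable_rpow_mul hν (by positivity) ⟨le_rfl, zero_le_one⟩ hc)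
      (h0c.const_mul _) fun s hs => ?_
    rw [two_mul, rpow_add hs.1, mul_assoc]
    exact mul_le_mul_of_nonneg_right (rpow_le_rpow hs.1.le hs.2.le hy)
      (mul_nonneg (rpow_nonneg hs.1.le y) (hν₀ s ⟨hs.1.le, hs.2.trans_le hc.2⟩))
  have htail : (∫ s in c..1, s ^ (2 * y) * ν s) ≤ wHat ν c :=
    integral_mono_on_of_le_Ioo hc.2
      (intervalIntegrable_rpow_mul hν (by positivity) hc ⟨zero_le_one, le_rfl⟩)
      (intervalIntegrable_of_integrableOn_Ico hν hc ⟨zero_le_one, le_rfl⟩) fun s hs =>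
      mul_le_of_le_one_left (hν₀ s ⟨hc.1.trans hs.1.le, hs.2⟩)
        (rpow_le_one (hc.1.trans hs.1.le) hs.2.le (by positivity))
  have hrest : 0 ≤ ∫ s in c..1, s ^ y * ν s :=
    integral_nonneg_of_forall_mem_Ioo hc.2 fun s hs =>
      mul_nonneg (rpow_nonneg (hc.1.trans hs.1.le) y) (hν₀ s ⟨hc.1.trans hs.1.le, hs.2⟩)
  rw [wMom_eq_add hν (by positivity) hc, wMom_eq_add hν hy hc]
  nlinarith [rpow_nonneg hc.1 y]

end Moments

lemma IsRadialWeight.wMom_pos {ν : ℝ → ℝ} (hν : IsRadialWeight ν) {x : ℝ} (hx : 0 ≤ x) :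
    0 < wMom ν x :=
  (mul_pos (by positivity) (hν.2.2 _ ⟨by norm_num, by norm_num⟩)).trans_le
    (rpow_mul_wHat_le_wMom_s16 hν.2.1 hν.1 (c := 1 / 2) hx ⟨by norm_num, by norm_num⟩)

section Iterate

variable {ν : ℝ → ℝ}

lemma wHat_one_sub_two_pow_div_le {C : ℝ} (hC : 0 ≤ C)
    (hD : ∀ r ∈ Ico (0:ℝ) 1, wHat ν r ≤ C * wHat ν ((1 + r) / 2)) (j : ℕ) {x : ℝ}
    (hx : 2 ^ j ≤ x) : wHat ν (1 - 2 ^ j / x) ≤ C ^ j * wHat ν (1 - 1 / x) := by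
  induction j with
  | zero => simp
  | succ j ih =>
    have hx0 : 0 < x := lt_of_lt_of_le (by positivity) hx
    have hr : 1 - 2 ^ (j + 1) / x ∈ Ico (0:ℝ) 1 :=
      ⟨by rw [sub_nonneg, div_le_one hx0]; exact hx, sub_lt_self _ (by positivity)⟩
    have hmid : (1 + (1 - 2 ^ (j + 1) / x)) / 2 = 1 - 2 ^ j / x := by rw [pow_succ]; ring
    calc wHat ν (1 - 2 ^ (j + 1) / x) ≤ C * wHat ν (1 - 2 ^ j / x) := hmid ▸ hD _ hr
      _ ≤ C * (C ^ j * wHat ν (1 - 1 / x)) :=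
        mul_le_mul_of_nonneg_left (ih ((pow_le_pow_right₀ one_le_two j.le_succ).trans hx)) hC
      _ = C ^ (j + 1) * wHat ν (1 - 1 / x) := by ring

lemma pow_mul_wHat_le_wHat_one_sub_pow_div {k C : ℝ} (hk : 1 ≤ k) (hC : 0 ≤ C)
    (hD : ∀ r ∈ Ico (0:ℝ) 1, wHat ν r ≥ C * wHat ν (1 - (1 - r) / k)) (m : ℕ) {x : ℝ}
    (hx : k ^ m ≤ x) : C ^ m * wHat ν (1 - 1 / x) ≤ wHat ν (1 - k ^ m / x) := by
  induction m with
  | zero => simp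
  | succ m ih =>
    have hk0 : 0 < k := zero_lt_one.trans_le hk
    have hx0 : 0 < x := lt_of_lt_of_le (by positivity) hx
    have hr : 1 - k ^ (m + 1) / x ∈ Ico (0:ℝ) 1 :=
      ⟨by rw [sub_nonneg, div_le_one hx0]; exact hx, sub_lt_self _ (by positivity)⟩
    have hprev : 1 - (1 - (1 - k ^ (m + 1) / x)) / k = 1 - k ^ m / x := by
      rw [pow_succ]; field_simp; ring
    calc C ^ (m + 1) * wHat ν (1 - 1 / x) = C * (C ^ m * wHat ν (1 - 1 / x)) := by ring
      _ ≤ C * wHat ν (1 - k ^ m / x) :=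
        mul_le_mul_of_nonneg_left (ih ((pow_le_pow_right₀ hk m.le_succ).trans hx)) hC
      _ ≤ wHat ν (1 - k ^ (m + 1) / x) := hprev ▸ hD _ hr

end Iterate

lemma exists_two_mul_pow_mul_exp_neg_le_one {C : ℝ} (hC : 0 ≤ C) :
    ∃ l : ℕ, 1 ≤ l ∧ 2 * C ^ l * exp (-(2 ^ l / 2)) ≤ 1 := by
  obtain ⟨k, hk⟩ := pow_unbounded_of_one_lt C one_lt_two
  have hlim : Tendsto (fun l : ℕ => ((2:ℝ) ^ l) ^ (k:ℝ) * exp (-(1 / 2) * 2 ^ l)) atTop (𝓝 0) :=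
    (tendsto_rpow_mul_exp_neg_mul_atTop_nhds_zero k (1 / 2) (by norm_num)).comp
      (tendsto_pow_atTop_atTop_of_one_lt one_lt_two)
  obtain ⟨l, hl1, hl⟩ := ((eventually_ge_atTop 1).and
    (hlim.eventually (gt_mem_nhds (by norm_num : (0:ℝ) < 1 / 2)))).exists
  refine ⟨l, hl1, ?_⟩
  have hCl : C ^ l ≤ ((2:ℝ) ^ l) ^ (k:ℝ) := by
    rw [rpow_natCast, ← pow_mul, mul_comm, pow_mul]
    exact pow_le_pow_left₀ hC hk.le l
  have hexp : exp (-(2 ^ l / 2)) = exp (-(1 / 2) * 2 ^ l) := by ring_nf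
  rw [hexp]
  nlinarith [exp_pos (-(1 / 2) * (2:ℝ) ^ l)]

lemma wMom_le_of_wMom_half_le {ν : ℝ → ℝ} (hν : IntegrableOn ν (Ico 0 1))
    (hν₀ : ∀ s ∈ Ico (0:ℝ) 1, 0 ≤ ν s) {A L x : ℝ} (hA : 0 ≤ A) (hL : 2 ≤ L) (hLx : L ≤ x)
    (hhalf : wMom ν (x / 2) ≤ A * wHat ν (1 - 2 / x)) :
    wMom ν x ≤ (exp (-(L / 2)) * A + 1) * wHat ν (1 - L / x) := by
  have hx0 : 0 < x := by linarith
  have hsplit := wMom_two_mul_le hν hν₀ (y := x / 2) (by positivity)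
    (one_sub_div_mem_Icc (by linarith) hLx)
  have hdecay : (1 - L / x) ^ (x / 2) ≤ exp (-(L / 2)) := by
    calc (1 - L / x) ^ (x / 2) ≤ exp (-(L / x)) ^ (x / 2) :=
          rpow_le_rpow (one_sub_div_mem_Icc (by linarith) hLx).1 (one_sub_le_exp_neg _)
            (by positivity)
      _ = exp (-(L / 2)) := by rw [← exp_mul]; congr 1; field_simp
  have hmono : wHat ν (1 - 2 / x) ≤ wHat ν (1 - L / x) :=
    wHat_anti hν hν₀ (one_sub_div_mem_Icc (by linarith) hLx).1
      (by linarith [div_le_div_of_nonneg_right hL hx0.le]) (sub_le_self _ (by positivity))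
  calc wMom ν x = wMom ν (2 * (x / 2)) := by ring_nf
    _ ≤ (1 - L / x) ^ (x / 2) * wMom ν (x / 2) + wHat ν (1 - L / x) := hsplit
    _ ≤ exp (-(L / 2)) * (A * wHat ν (1 - L / x)) + wHat ν (1 - L / x) := by
        gcongr
        · exact wMom_nonneg_s16 hν₀ _
        · exact hhalf.trans (mul_le_mul_of_nonneg_left hmono hA)
    _ = (exp (-(L / 2)) * A + 1) * wHat ν (1 - L / x) := by ring

lemma exists_wMom_le_mul_wHat_of_Dhat {ν : ℝ → ℝ} (hν : IntegrableOn ν (Ico 0 1))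
    (hν₀ : ∀ s ∈ Ico (0:ℝ) 1, 0 ≤ ν s) (hD : Dhat ν) :
    ∃ C, ∀ x, 1 ≤ x → wMom ν x ≤ C * wHat ν (1 - 1 / x) := by
  obtain ⟨C₁, hC₁, hD⟩ := hD
  -- this choice of `l` makes the constant `2 C₁ ^ l` reproduce itself along the induction
  obtain ⟨l, hl, hexp⟩ := exists_two_mul_pow_mul_exp_neg_le_one (zero_le_one.trans hC₁.le)
  set L : ℝ := 2 ^ l
  set B : ℝ := C₁ ^ l
  have hL : 2 ≤ L := le_self_pow₀ one_le_two (by omega)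
  have hB : 0 ≤ B := by positivity
  have hshift : ∀ x, L ≤ x → wHat ν (1 - L / x) ≤ B * wHat ν (1 - 1 / x) :=
    fun x hx => wHat_one_sub_two_pow_div_le (zero_le_one.trans hC₁.le) hD l hx
  have hsmall : ∀ x, 1 ≤ x → x ≤ L → wMom ν x ≤ (2 * B) * wHat ν (1 - 1 / x) := by
    intro x hx1 hxL
    have hx := one_sub_div_mem_Icc zero_le_one hx1
    have hhat := wHat_nonneg_s16 hν₀ hx
    calc wMom ν x ≤ wHat ν (1 - L / L) := by
          rw [div_self (by positivity), sub_self]; exact wMom_le_wHat_zero hν hν₀ (by linarith)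
      _ ≤ B * wHat ν (1 - 1 / L) := hshift L le_rfl
      _ ≤ B * wHat ν (1 - 1 / x) := by
          refine mul_le_mul_of_nonneg_left (wHat_anti hν hν₀ hx.1 ?_ ?_) hB
          · linarith [one_div_le_one_div_of_le (by linarith) hxL]
          · exact sub_le_self _ (by positivity)
      _ ≤ (2 * B) * wHat ν (1 - 1 / x) := by nlinarith
  have hdyadic : ∀ j : ℕ, ∀ x, 1 ≤ x → x ≤ 2 ^ j →
      wMom ν x ≤ (2 * B) * wHat ν (1 - 1 / x) := by
    intro j
    induction j with
    | zero => intro x hx1 hxj; exact hsmall x hx1 (by simp at hxj; linarith)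
    | succ j ih =>
      intro x hx1 hxj
      rcases le_or_gt x L with hxL | hxL
      · exact hsmall x hx1 hxL
      have hhalf := ih (x / 2) (by linarith) (by rw [pow_succ] at hxj; linarith)
      rw [one_div_div] at hhalf
      have hhat := wHat_nonneg_s16 hν₀ (one_sub_div_mem_Icc (by linarith) hxL.le)
      calc wMom ν x ≤ (exp (-(L / 2)) * (2 * B) + 1) * wHat ν (1 - L / x) :=
            wMom_le_of_wMom_half_le hν hν₀ (by positivity) hL hxL.le hhalf
        _ ≤ 2 * wHat ν (1 - L / x) := by nlinarith
        _ ≤ (2 * B) * wHat ν (1 - 1 / x) := by nlinarith [hshift x hxL.le]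
  refine ⟨2 * B, fun x hx1 => ?_⟩
  obtain ⟨j, hj⟩ := pow_unbounded_of_one_lt x one_lt_two
  exact hdyadic j x hx1 hj.le

lemma exists_mul_wMom_le_wHat_of_Dclass {ν : ℝ → ℝ} (hν : IntegrableOn ν (Ico 0 1))
    (hν₀ : ∀ s ∈ Ico (0:ℝ) 1, 0 ≤ ν s) (hD : Dclass ν) {A : ℝ} (hA : 0 ≤ A) :
    ∃ K ≥ (1:ℝ), ∀ x, K ≤ x → A * wMom ν x ≤ wHat ν (1 - K / x) := by
  obtain ⟨C, hC⟩ := exists_wMom_le_mul_wHat_of_Dhat hν hν₀ hD.1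
  obtain ⟨k, hk, C₂, hC₂, hDc⟩ := hD.2
  obtain ⟨m, hm⟩ := pow_unbounded_of_one_lt (A * C) hC₂
  refine ⟨k ^ m, one_le_pow₀ hk.le, fun x hx => ?_⟩
  have hx1 : 1 ≤ x := (one_le_pow₀ hk.le).trans hx
  have hhat := wHat_nonneg_s16 hν₀ (one_sub_div_mem_Icc zero_le_one hx1)
  calc A * wMom ν x ≤ A * C * wHat ν (1 - 1 / x) := by
        rw [mul_assoc]; exact mul_le_mul_of_nonneg_left (hC x hx1) hA
    _ ≤ C₂ ^ m * wHat ν (1 - 1 / x) := mul_le_mul_of_nonneg_right hm.le hhat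
    _ ≤ wHat ν (1 - k ^ m / x) :=
        pow_mul_wHat_le_wHat_one_sub_pow_div hk.le (by positivity) hDc m hx

lemma lintegral_ball_comp_norm (F : ℝ → ℝ≥0∞) (hF : AEMeasurable F (volume.restrict (Ioo 0 1))) :
    ∫⁻ z in Metric.ball (0:ℂ) 1, F ‖z‖ =
      ENNReal.ofReal (2 * π) * ∫⁻ s in Ioo 0 1, ENNReal.ofReal s * F s := by
  set G : ℝ → ℝ≥0∞ := (Ioo 0 1).indicator fun s => ENNReal.ofReal s * F s
  have hG : AEMeasurable G (volume.restrict (Ioi 0)) := by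
    refine (aemeasurable_indicator_iff measurableSet_Ioo).mpr ?_
    rw [Measure.restrict_restrict measurableSet_Ioo, Ioo_inter_Ioi, max_self]
    exact ENNReal.measurable_ofReal.aemeasurable.mul hF
  have hpolar : ∀ q ∈ polarCoord.target, ENNReal.ofReal q.1 •
      (Metric.ball (0:ℂ) 1).indicator (fun z => F ‖z‖) (Complex.polarCoord.symm q) = G q.1 := by
    rintro ⟨r, θ⟩ ⟨hr, -⟩
    have hnorm : ‖Complex.polarCoord.symm (r, θ)‖ = r := by
      rw [Complex.norm_polarCoord_symm, abs_of_pos hr]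
    simp only [G]
    rcases lt_or_ge r 1 with h1 | h1
    · rw [indicator_of_mem (mem_ball_zero_iff.mpr (hnorm.symm ▸ h1)),
        indicator_of_mem (show r ∈ Ioo 0 1 from ⟨hr, h1⟩), hnorm, smul_eq_mul]
    · rw [indicator_of_notMem (by rw [mem_ball_zero_iff, hnorm]; exact h1.not_gt),
        indicator_of_notMem (show r ∉ Ioo 0 1 from fun h => h1.not_gt h.2), smul_zero]
  rw [← lintegral_indicator measurableSet_ball, ← Complex.lintegral_comp_polarCoord_symm,
    setLIntegral_congr_fun polarCoord.open_target.measurableSet hpolar, polarCoord_target,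
    Measure.volume_eq_prod, ← Measure.prod_restrict]
  have hprod := lintegral_prod_mul hG (aemeasurable_const (b := (1 : ℝ≥0∞)))
    (ν := volume.restrict (Ioo (-π) π))
  simp only [mul_one] at hprod
  rw [hprod, lintegral_one, Measure.restrict_apply_univ, Real.volume_Ioo, lintegral_indicator
    measurableSet_Ioo, Measure.restrict_restrict measurableSet_Ioo, Ioo_inter_Ioi, max_self,
    mul_comm]
  ring_nf

lemma lintegral_ball_rpow_norm_mul (N : ℝ) {G : ℝ → ℝ}
    (hG : AEMeasurable G (volume.restrict (Ioo 0 1))) :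
    ∫⁻ z in Metric.ball (0:ℂ) 1, ENNReal.ofReal (‖z‖ ^ N * G ‖z‖) =
      ENNReal.ofReal (2 * π) * ∫⁻ s in Ioo 0 1, ENNReal.ofReal (s ^ (N + 1) * G s) := by
  rw [lintegral_ball_comp_norm (fun s => ENNReal.ofReal (s ^ N * G s))
    (((measurable_id.pow_const N).aemeasurable.mul hG).ennreal_ofReal)]
  congr 1
  refine setLIntegral_congr_fun measurableSet_Ioo fun s hs => ?_
  rw [← ENNReal.ofReal_mul hs.1.le, rpow_add_one hs.1.ne']
  ring_nf

section Concentration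

variable {w φ : ℝ → ℝ} (hw : IntegrableOn w (Ico 0 1)) (hw₀ : ∀ s ∈ Ico (0:ℝ) 1, 0 ≤ w s)
  {N c ρ : ℝ} (hN : 0 ≤ N) (hc : 0 < c) (hρ : ρ < 1) (hφ : ∀ s ∈ Ioc 0 ρ, 2 * c ≤ φ s)
  (h : ∫⁻ s in Ioo 0 1, ENNReal.ofReal (s ^ N * (φ s * w s)) ≤
    ENNReal.ofReal c * ∫⁻ s in Ioo 0 1, ENNReal.ofReal (s ^ N * w s))
include hw hw₀ hN hc hρ hφ h

lemma lintegral_rpow_mul_le_two_mul_lintegral_Ioo (hρ₀ : 0 ≤ ρ) :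
    ∫⁻ s in Ioo 0 1, ENNReal.ofReal (s ^ N * w s) ≤
      2 * ∫⁻ s in Ioo ρ 1, ENNReal.ofReal (s ^ N * w s) := by
  set f : ℝ → ℝ≥0∞ := fun s => ENNReal.ofReal (s ^ N * w s)
  set J := ∫⁻ s in Ioc 0 ρ, f s
  have hsub : Ioc 0 ρ ⊆ Ioo (0:ℝ) 1 := fun s hs => ⟨hs.1, hs.2.trans_lt hρ⟩
  have hsplit : ∫⁻ s in Ioo 0 1, f s = J + ∫⁻ s in Ioo ρ 1, f s := by
    rw [← lintegral_union measurableSet_Ioo (disjoint_left.mpr fun s h1 h2 => h1.2.not_gt h2.1),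
      Ioc_union_Ioo_eq_Ioo hρ₀ hρ]
  have hJ : ENNReal.ofReal c * (2 * J) ≤ ENNReal.ofReal c * ∫⁻ s in Ioo 0 1, f s :=
    calc ENNReal.ofReal c * (2 * J) = ∫⁻ s in Ioc 0 ρ, ENNReal.ofReal (2 * c) * f s := by
          rw [lintegral_const_mul' _ _ ENNReal.ofReal_ne_top, ENNReal.ofReal_mul zero_le_two,
            ENNReal.ofReal_ofNat]
          ring
      _ ≤ ∫⁻ s in Ioc 0 ρ, ENNReal.ofReal (s ^ N * (φ s * w s)) := by
          refine setLIntegral_mono' measurableSet_Ioc fun s hs => ?_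
          rw [← ENNReal.ofReal_mul (by linarith)]
          refine ENNReal.ofReal_le_ofReal ?_
          have := mul_nonneg (rpow_nonneg hs.1.le N) (hw₀ s ⟨hs.1.le, hs.2.trans_lt hρ⟩)
          nlinarith [hφ s hs]
      _ ≤ ∫⁻ s in Ioo 0 1, ENNReal.ofReal (s ^ N * (φ s * w s)) := lintegral_mono_set hsub
      _ ≤ ENNReal.ofReal c * ∫⁻ s in Ioo 0 1, f s := h
  have hJfin : J ≠ ⊤ := by
    refine ne_top_of_le_ne_top (ENNReal.ofReal_ne_top (r := wHat w 0)) ?_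
    rw [ofReal_wHat hw hw₀ ⟨le_rfl, zero_le_one⟩]
    exact (lintegral_mono_set hsub).trans (setLIntegral_mono' measurableSet_Ioo fun s hs =>
      ENNReal.ofReal_le_ofReal (mul_le_of_le_one_left (hw₀ s ⟨hs.1.le, hs.2⟩)
        (rpow_le_one hs.1.le hs.2.le hN)))
  have hJK : J ≤ ∫⁻ s in Ioo ρ 1, f s := by
    refine ENNReal.le_of_add_le_add_left hJfin ?_
    rw [← hsplit, ← two_mul]
    exact (ENNReal.mul_le_mul_iff_right (ENNReal.ofReal_pos.mpr hc).ne'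
      ENNReal.ofReal_ne_top).mp hJ
  rw [hsplit, two_mul]
  gcongr

lemma rpow_mul_wHat_le_two_mul_wHat {σ : ℝ} (hσ : 0 ≤ σ) (hσρ : σ ≤ ρ) :
    σ ^ N * wHat w σ ≤ 2 * wHat w ρ := by
  have hρ₀ : 0 ≤ ρ := hσ.trans hσρ
  have hσmass : ENNReal.ofReal (σ ^ N * wHat w σ) ≤
      ∫⁻ s in Ioo 0 1, ENNReal.ofReal (s ^ N * w s) := by
    rw [ENNReal.ofReal_mul (rpow_nonneg hσ N), ofReal_wHat hw hw₀ ⟨hσ, hσρ.trans hρ.le⟩,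
      ← lintegral_const_mul' _ _ ENNReal.ofReal_ne_top]
    refine (setLIntegral_mono' measurableSet_Ioo fun s hs => ?_).trans
      (lintegral_mono_set fun s (hs : s ∈ Ioo σ 1) => ⟨hσ.trans_lt hs.1, hs.2⟩)
    rw [← ENNReal.ofReal_mul (rpow_nonneg hσ N)]
    exact ENNReal.ofReal_le_ofReal (mul_le_mul_of_nonneg_right
      (rpow_le_rpow hσ hs.1.le hN) (hw₀ s ⟨hσ.trans hs.1.le, hs.2⟩))
  have hρmass : ∫⁻ s in Ioo ρ 1, ENNReal.ofReal (s ^ N * w s) ≤ ENNReal.ofReal (wHat w ρ) := by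
    rw [ofReal_wHat hw hw₀ ⟨hρ₀, hρ.le⟩]
    exact setLIntegral_mono' measurableSet_Ioo fun s hs =>
      ENNReal.ofReal_le_ofReal (mul_le_of_le_one_left (hw₀ s ⟨hρ₀.trans hs.1.le, hs.2⟩)
        (rpow_le_one (hρ₀.trans hs.1.le) hs.2.le hN))
  refine (ENNReal.ofReal_le_ofReal_iff (by linarith [wHat_nonneg_s16 hw₀ ⟨hρ₀, hρ.le⟩])).mp ?_
  calc ENNReal.ofReal (σ ^ N * wHat w σ)
      ≤ 2 * ∫⁻ s in Ioo ρ 1, ENNReal.ofReal (s ^ N * w s) :=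
        hσmass.trans (lintegral_rpow_mul_le_two_mul_lintegral_Ioo hw hw₀ hN hc hρ hφ h hρ₀)
    _ ≤ 2 * ENNReal.ofReal (wHat w ρ) := by gcongr
    _ = ENNReal.ofReal (2 * wHat w ρ) := by
        rw [ENNReal.ofReal_mul zero_le_two, ENNReal.ofReal_ofNat]

end Concentration

lemma exp_neg_two_mul_le_one_sub_rpow {u y : ℝ} (hu : 0 ≤ u) (hu' : u ≤ 1 / 2) (hy : 0 ≤ y) :
    exp (-(2 * u * y)) ≤ (1 - u) ^ y := by
  have h1u : 0 < 1 - u := by linarith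
  have hlog : -(2 * u) ≤ log (1 - u) := by
    have hinv : (1 - u)⁻¹ ≤ 1 + 2 * u := by
      rw [inv_eq_one_div, div_le_iff₀ h1u]; nlinarith
    linarith [one_sub_inv_le_log_of_pos h1u]
  rw [rpow_def_of_pos h1u]
  exact exp_le_exp.mpr (by nlinarith)

lemma IsRadialWeight.Dhat_of_forall_Ico_le {ω : ℝ → ℝ} (hω : IsRadialWeight ω) {r₀ C : ℝ}
    (hr₀ : r₀ ∈ Ico (0:ℝ) 1) (h : ∀ r ∈ Ico r₀ 1, wHat ω r ≤ C * wHat ω ((1 + r) / 2)) :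
    Dhat ω := by
  obtain ⟨hω₀, hω, hpos⟩ := hω
  have hmid₀ : (1 + r₀) / 2 ∈ Ico (0:ℝ) 1 := ⟨by linarith [hr₀.1], by linarith [hr₀.2]⟩
  set B := wHat ω 0 / wHat ω ((1 + r₀) / 2)
  have hB : 0 ≤ B := div_nonneg (hpos 0 ⟨le_rfl, one_pos⟩).le (hpos _ hmid₀).le
  refine ⟨max C B + 2, by linarith [le_max_right C B], fun r hr => ?_⟩
  have hmid : 0 ≤ wHat ω ((1 + r) / 2) :=
    wHat_nonneg_s16 hω₀ ⟨by linarith [hr.1], by linarith [hr.2]⟩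
  have hD : max C B ≤ max C B + 2 := by linarith
  rcases le_or_gt r₀ r with hr₀r | hrr₀
  · calc wHat ω r ≤ C * wHat ω ((1 + r) / 2) := h r ⟨hr₀r, hr.2⟩
      _ ≤ (max C B + 2) * wHat ω ((1 + r) / 2) :=
          mul_le_mul_of_nonneg_right ((le_max_left C B).trans hD) hmid
  · calc wHat ω r ≤ wHat ω 0 := wHat_anti hω hω₀ le_rfl hr.1 hr.2.le
      _ = B * wHat ω ((1 + r₀) / 2) := (div_mul_cancel₀ _ (hpos _ hmid₀).ne').symm
      _ ≤ B * wHat ω ((1 + r) / 2) := by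
          refine mul_le_mul_of_nonneg_left (wHat_anti hω hω₀ (by linarith [hr.1])
            (by linarith) hmid₀.2.le) hB
      _ ≤ (max C B + 2) * wHat ω ((1 + r) / 2) :=
          mul_le_mul_of_nonneg_right ((le_max_right C B).trans hD) hmid

lemma IsRadialWeight.Dhat_of_wHat_le_at_scales {ω : ℝ → ℝ} (hω : IsRadialWeight ω) {K C : ℝ}
    (hK : 1 ≤ K) (hC : 0 ≤ C) (h : ∀ n : ℕ, K / (2 * n + 1) ≤ 1 / 8 →
      wHat ω (1 - 4 * (K / (2 * n + 1))) ≤ C * wHat ω (1 - K / (2 * n + 1))) :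
    Dhat ω := by
  refine hω.Dhat_of_forall_Ico_le (r₀ := 3 / 4) (C := C) ⟨by norm_num, by norm_num⟩ fun r hr => ?_
  set g := (1 - r) / 2
  have hg : 0 < g := by simp only [g]; linarith [hr.2]
  have hg8 : g ≤ 1 / 8 := by simp only [g]; linarith [hr.1]
  -- `n` is chosen so that `T = K / (2n+1)` satisfies `g / 2 ≤ T ≤ g`
  set n := ⌈(K / g - 1) / 2⌉₊
  set x : ℝ := 2 * n + 1
  have hKg : 8 ≤ K / g := by rw [le_div_iff₀ hg]; linarith
  have hxlow : K / g ≤ x := by linarith [Nat.le_ceil ((K / g - 1) / 2)]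
  have hxup : x ≤ 2 * (K / g) := by
    linarith [Nat.ceil_lt_add_one (show 0 ≤ (K / g - 1) / 2 by linarith)]
  have hx : 0 < x := by positivity
  have hTg : K / x ≤ g := by rw [div_le_iff₀ hx]; rwa [div_le_iff₀ hg, mul_comm] at hxlow
  have hgT : g ≤ 2 * (K / x) := by
    rw [mul_div_assoc', le_div_iff₀ hx]; rwa [mul_div_assoc', le_div_iff₀ hg, mul_comm] at hxup
  have hT0 : 0 < K / x := by positivity
  have hω₀ := hω.1
  calc wHat ω r ≤ wHat ω (1 - 4 * (K / x)) :=
        wHat_anti hω.2.1 hω₀ (by linarith) (by simp only [g] at hgT; linarith) hr.2.le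
    _ ≤ C * wHat ω (1 - K / x) := h n (hTg.trans hg8)
    _ ≤ C * wHat ω ((1 + r) / 2) := by
        refine mul_le_mul_of_nonneg_left (wHat_anti hω.2.1 hω₀ (by linarith [hr.1]) ?_ ?_) hC
        · simp only [g] at hTg; linarith
        · linarith

lemma rpow_mul_wHat_le_two_mul_wHat_of_lintegral_ball_le {w φ : ℝ → ℝ}
    (hw : IntegrableOn w (Ico 0 1)) (hw₀ : ∀ s ∈ Ico (0:ℝ) 1, 0 ≤ w s)
    (hφ_meas : AEMeasurable φ (volume.restrict (Ioo 0 1))) {N c ρ σ : ℝ} (hN : 0 ≤ N)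
    (hc : 0 < c) (hσ : 0 ≤ σ) (hσρ : σ ≤ ρ) (hρ : ρ < 1) (hφ : ∀ s ∈ Ioc 0 ρ, 2 * c ≤ φ s)
    (h : ∫⁻ z in Metric.ball (0:ℂ) 1, ENNReal.ofReal (‖z‖ ^ N * (φ ‖z‖ * w ‖z‖)) ≤
      ENNReal.ofReal c * ∫⁻ z in Metric.ball (0:ℂ) 1, ENNReal.ofReal (‖z‖ ^ N * w ‖z‖)) :
    σ ^ (N + 1) * wHat w σ ≤ 2 * wHat w ρ := by
  refine rpow_mul_wHat_le_two_mul_wHat hw hw₀ (by positivity) hc hρ hφ ?_ hσ hσρ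
  have hw_meas : AEMeasurable w (volume.restrict (Ioo 0 1)) :=
    (hw.mono_set Ioo_subset_Ico_self).aemeasurable
  rwa [lintegral_ball_rpow_norm_mul N (G := fun s => φ s * w s) (hφ_meas.mul hw_meas),
    lintegral_ball_rpow_norm_mul N hw_meas, mul_left_comm,
    ENNReal.mul_le_mul_iff_right (by simp [pi_pos]) ENNReal.ofReal_ne_top] at h

lemma wHat_le_of_monomial_inequality {ω μ : ℝ → ℝ} (hω : IsRadialWeight ω)
    (hμ : IsRadialWeight μ) {p C K : ℝ} (hp : 0 < p) (hC : 0 < C) (hK : 0 < K) {n : ℕ}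
    (hn : K / (2 * n + 1) ≤ 1 / 8)
    (hscale : (2 * C) ^ p⁻¹ * wMom μ (2 * n + 1) ≤ wHat μ (1 - K / (2 * n + 1)))
    (hLP : ∫⁻ z in Metric.ball (0:ℂ) 1,
        ENNReal.ofReal (‖z‖ ^ ((n : ℝ) * p) * (wHat μ ‖z‖ ^ p * ω ‖z‖)) ≤
      ENNReal.ofReal (C * wMom μ (2 * n + 1) ^ p) *
        ∫⁻ z in Metric.ball (0:ℂ) 1, ENNReal.ofReal (‖z‖ ^ ((n : ℝ) * p) * ω ‖z‖)) :
    wHat ω (1 - 4 * (K / (2 * n + 1))) ≤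
      4 / exp (-(4 * p * K)) * wHat ω (1 - K / (2 * n + 1)) := by
  set x : ℝ := 2 * n + 1
  set T := K / x
  have hx : 0 < x := by positivity
  have hT : 0 < T := by positivity
  have hmom : 0 ≤ wMom μ x := wMom_nonneg_s16 hμ.1 x
  have hμ_meas : AEMeasurable (fun s => wHat μ s ^ p) (volume.restrict (Ioo 0 1)) :=
    ((aemeasurable_restrict_of_antitoneOn measurableSet_Icc fun a ha b hb hab =>
      wHat_anti hμ.2.1 hμ.1 ha.1 hab hb.2).mono_measure
      (Measure.restrict_mono Ioo_subset_Icc_self le_rfl)).pow_const p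
  have hlarge : ∀ s ∈ Ioc 0 (1 - T), 2 * (C * wMom μ x ^ p) ≤ wHat μ s ^ p := by
    intro s hs
    rw [← mul_assoc, ← rpow_inv_rpow (by positivity : (0:ℝ) ≤ 2 * C) hp.ne',
      ← mul_rpow (by positivity) hmom]
    exact rpow_le_rpow (by positivity)
      (hscale.trans (wHat_anti hμ.2.1 hμ.1 hs.1.le hs.2 (by linarith))) hp.le
  have hkey := rpow_mul_wHat_le_two_mul_wHat_of_lintegral_ball_le hω.2.1 hω.1 hμ_meas
    (σ := 1 - 4 * T) (by positivity) (mul_pos hC (rpow_pos_of_pos (hμ.wMom_pos hx.le) p))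
    (by linarith) (by linarith) (by linarith) hlarge hLP
  have hlow : exp (-(4 * p * K)) / 2 ≤ (1 - 4 * T) ^ ((n : ℝ) * p + 1) := by
    have hTx : T * x = K := div_mul_cancel₀ K hx.ne'
    have hexp : exp (-(4 * p * K)) ≤ exp (-(2 * (4 * T) * (n * p))) :=
      exp_le_exp.mpr (by nlinarith)
    rw [rpow_add_one (by linarith)]
    have := exp_neg_two_mul_le_one_sub_rpow (u := 4 * T) (y := n * p) (by positivity) (by linarith)
      (by positivity)
    nlinarith [exp_pos (-(4 * p * K))]
  have hhat : 0 ≤ wHat ω (1 - 4 * T) := wHat_nonneg_s16 hω.1 ⟨by linarith, by linarith⟩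
  rw [div_mul_eq_mul_div, le_div_iff₀ (exp_pos _)]
  nlinarith

/-- **Theorem (monomial test for `D̂`).** Let `ω` be a radial weight, `0 < p < ∞` and
`μ ∈ D`.  If there is `C > 0` with
`∫_𝔻 |z|^{np} μ̂(z)^p ω(z) dA ≤ C μ_{2n+1}^p ∫_𝔻 |z|^{np} ω(z) dA` for all `n ∈ ℕ ∪ {0}`,
then `ω ∈ D̂`. -/
theorem Dhat_of_monomial_littlewood_paley (ω μ : ℝ → ℝ) (hω : IsRadialWeight ω)
    (p : ℝ) (hp : 0 < p) (hμ : IsRadialWeight μ) (hμD : Dclass μ)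
    (h : ∃ C > (0:ℝ), ∀ n : ℕ,
      (∫⁻ z in Metric.ball (0:ℂ) 1,
          ENNReal.ofReal (‖z‖ ^ ((n : ℝ) * p) * (wHat μ ‖z‖ ^ p * ω ‖z‖))) ≤
        ENNReal.ofReal (C * wMom μ (2 * (n : ℝ) + 1) ^ p) *
          ∫⁻ z in Metric.ball (0:ℂ) 1, ENNReal.ofReal (‖z‖ ^ ((n : ℝ) * p) * ω ‖z‖)) :
    Dhat ω := by
  obtain ⟨C, hC, hLP⟩ := h
  obtain ⟨K, hK, hμK⟩ :=
    exists_mul_wMom_le_wHat_of_Dclass hμ.2.1 hμ.1 hμD (A := (2 * C) ^ p⁻¹) (by positivity)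
  refine hω.Dhat_of_wHat_le_at_scales hK (by positivity) fun n hn =>
    wHat_le_of_monomial_inequality hω hμ hp hC (by linarith) hn (hμK _ ?_) (hLP n)
  have hx : (0:ℝ) < 2 * n + 1 := by positivity
  linarith [(div_le_iff₀ hx).mp hn]
end
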